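/- Let p ∈ [1,∞), p* = p/(p−1), and let X, X̂ be ℝ^d-valued random variables with densities p_X, p_X̂ ∈ L^{p*}(ℝ^d). Then for every essentially bounded f ∈ W^{1,p}(ℝ^d) and every q ∈ (0,∞), E[|f(X) − f(X̂)|^q] ≤ C · (E[|X − X̂|^q])^{1/(q+1)}, where C = (2K₀)^q + (2‖f‖_∞)^q A_p (‖p_X‖_{L^{p*}} + ‖p_X̂‖_{L^{p*}}) ‖ |Df| ‖_{L^p} and A_p is the constant in the strong (p,p) Hardy–Littlewood maximal inequality (for p = 1, interpret the corresponding term via the weak estimate). -/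

import Mathlib

/-!
Let `M` be the maximal function of `|Df|` and split on the event `G = {M X ≤ Λ, M X̂ ≤ Λ}`.
On `G` the pointwise estimate gives `|f X − f X̂|^q ≤ (2K₀Λ)^q |X − X̂|^q`. Off `G` the integrand
is at most `(2‖f‖_∞)^q`, and by Markov's and Hölder's inequalities
`P(M X > Λ) ≤ Λ⁻¹ ‖M‖_{L^p} ‖p_X‖_{L^{p*}} ≤ Λ⁻¹ A_p ‖Df‖_{L^p} ‖p_X‖_{L^{p*}}`.
The choice `Λ = E[|X − X̂|^q]^{−1/(q+1)}` balances the two terms.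

The pointwise estimate is assumed only for almost every pair of points, whereas the joint law of
`(X, X̂)` need not have a density. Averaging it over small balls extends it to every pair of
Lebesgue points of `f` and `M` at which it holds almost everywhere in the second variable;
`X` and `X̂` take values in that set almost surely because their laws have densities.
-/

open MeasureTheory Metric Filter Set
open scoped ENNReal Topology

noncomputable section

abbrev Euc (d : ℕ) := EuclideanSpace ℝ (Fin d)

/-- Hardy--Littlewood maximal function of a measure. -/
def maximal {d : ℕ} (ν : Measure (Euc d)) (x : Euc d) : ℝ≥0∞ :=
  ⨆ (s : ℝ) (_ : 0 < s), ν (closedBall x s) / volume (closedBall x s)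

/-- Restricted Hardy--Littlewood maximal function of a measure. -/
def maximalR {d : ℕ} (R : ℝ) (ν : Measure (Euc d)) (x : Euc d) : ℝ≥0∞ :=
  ⨆ (s : ℝ) (_ : s ∈ Set.Ioc 0 R), ν (closedBall x s) / volume (closedBall x s)

/-- Divergence of a `C¹` vector field on `ℝ^d`. -/
def ediv {d : ℕ} (g : Euc d → Euc d) (x : Euc d) : ℝ :=
  ∑ i : Fin d,
    (inner ℝ (fderiv ℝ g x (EuclideanSpace.single i (1:ℝ))) (EuclideanSpace.single i (1:ℝ)) : ℝ)

theorem le_maximal {d : ℕ} (ν : Measure (Euc d)) (x : Euc d) {s : ℝ} (hs : 0 < s) :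
    ν (closedBall x s) / volume (closedBall x s) ≤ maximal ν x :=
  le_iSup₂ (f := fun s (_ : 0 < s) => ν (closedBall x s) / volume (closedBall x s)) s hs

theorem lowerSemicontinuous_maximal {d : ℕ} (ν : Measure (Euc d)) :
    LowerSemicontinuous (maximal ν) := by
  intro x c hc
  obtain ⟨s, hs, hcs⟩ : ∃ s, 0 < s ∧ c < ν (closedBall x s) / volume (closedBall x s) := by
    simpa only [maximal, lt_iSup_iff, exists_prop] using hc
  have hvol : Tendsto (fun t => volume (closedBall x t)) (𝓝[>] s)
      (𝓝 (volume (closedBall x s))) := by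
    have hlim : Tendsto (fun t : ℝ => ENNReal.ofReal (t ^ d) * volume (closedBall (0 : Euc d) 1))
        (𝓝[>] s) (𝓝 (ENNReal.ofReal (s ^ d) * volume (closedBall (0 : Euc d) 1))) :=
      ENNReal.Tendsto.mul_const (ENNReal.tendsto_ofReal ((tendsto_id'.2 nhdsWithin_le_nhds).pow d))
        (Or.inr measure_closedBall_lt_top.ne)
    rw [Measure.addHaar_closedBall' _ _ hs.le, finrank_euclideanSpace_fin]
    refine hlim.congr' ?_
    filter_upwards [self_mem_nhdsWithin] with t ht
    rw [Measure.addHaar_closedBall' _ _ (hs.trans ht).le, finrank_euclideanSpace_fin]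
  -- Enlarging the radius slightly keeps the ratio above `c`; the enlarged ball then contains
  -- the original one for every nearby centre.
  obtain ⟨t, hct, hst⟩ : ∃ t, c < ν (closedBall x s) / volume (closedBall x t) ∧ s < t :=
    (((ENNReal.Tendsto.const_div hvol (Or.inl measure_closedBall_lt_top.ne)).eventually
      (lt_mem_nhds hcs)).and self_mem_nhdsWithin).exists
  filter_upwards [ball_mem_nhds x (sub_pos.2 hst)] with x' hx'
  calc c < ν (closedBall x s) / volume (closedBall x t) := hct
    _ ≤ ν (closedBall x' t) / volume (closedBall x' t) := by
      rw [Measure.addHaar_closedBall_center volume x t,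
        ← Measure.addHaar_closedBall_center volume x' t]
      gcongr
      exact closedBall_subset_closedBall' (by linarith [mem_ball'.1 hx'])
    _ ≤ maximal ν x' := le_maximal ν x' (hs.trans hst)

theorem measurable_maximal {d : ℕ} (ν : Measure (Euc d)) : Measurable (maximal ν) :=
  (lowerSemicontinuous_maximal ν).measurable

section Density

variable {Ω α : Type*} [MeasurableSpace Ω] [MeasurableSpace α] {P : Measure Ω} {μ : Measure α}
  {Y : Ω → α} {ρ : α → ℝ≥0∞}

theorem ae_comp_of_map_eq_withDensity (hY : AEMeasurable Y P) (hdY : P.map Y = μ.withDensity ρ)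
    {Q : α → Prop} (hQ : ∀ᵐ x ∂μ, Q x) : ∀ᵐ ω ∂P, Q (Y ω) :=
  ae_of_ae_map hY (hdY ▸ (withDensity_absolutelyContinuous μ ρ).ae_le hQ)

theorem lintegral_withDensity_le_Lp_mul_Lq [SFinite μ] {p r : ℝ} (hpr : p.HolderConjugate r)
    {M : α → ℝ≥0∞} (hM : Measurable M) (ρ : α → ℝ≥0∞) :
    ∫⁻ x, M x ∂μ.withDensity ρ
      ≤ (∫⁻ x, M x ^ p ∂μ) ^ (1 / p) * (∫⁻ x, ρ x ^ r ∂μ) ^ (1 / r) := by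
  obtain ⟨g, hg, hgρ, hμg⟩ := exists_measurable_le_withDensity_eq μ ρ
  rw [← hμg, lintegral_withDensity_eq_lintegral_mul μ hg hM, mul_comm g M]
  calc ∫⁻ x, (M * g) x ∂μ ≤ (∫⁻ x, M x ^ p ∂μ) ^ (1 / p) * (∫⁻ x, g x ^ r ∂μ) ^ (1 / r) :=
        ENNReal.lintegral_mul_le_Lp_mul_Lq μ hpr hM.aemeasurable hg.aemeasurable
    _ ≤ (∫⁻ x, M x ^ p ∂μ) ^ (1 / p) * (∫⁻ x, ρ x ^ r ∂μ) ^ (1 / r) := by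
      gcongr with x
      · exact hpr.symm.one_div_nonneg
      · exact hpr.symm.nonneg
      · exact hgρ x

theorem measure_lt_comp_le_of_map_eq_withDensity [SFinite μ] (hY : Measurable Y)
    (hdY : P.map Y = μ.withDensity ρ) {M : α → ℝ≥0∞} (hM : Measurable M) {p r : ℝ}
    (hpr : p.HolderConjugate r) {Λ : ℝ≥0∞} (hΛ0 : Λ ≠ 0) (hΛt : Λ ≠ ∞) :
    P {ω | Λ < M (Y ω)}
      ≤ Λ⁻¹ * ((∫⁻ x, M x ^ p ∂μ) ^ (1 / p) * (∫⁻ x, ρ x ^ r ∂μ) ^ (1 / r)) :=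
  calc P {ω | Λ < M (Y ω)} ≤ P.map Y {x | Λ ≤ M x} := by
        rw [Measure.map_apply hY (measurableSet_le measurable_const hM)]
        exact measure_mono fun ω (hω : Λ < M (Y ω)) => hω.le
    _ ≤ (∫⁻ x, M x ∂P.map Y) / Λ := meas_ge_le_lintegral_div hM.aemeasurable hΛ0 hΛt
    _ ≤ _ := by
      rw [ENNReal.div_eq_inv_mul, hdY]
      exact mul_le_mul_right (lintegral_withDensity_le_Lp_mul_Lq (μ := μ) hpr hM ρ) _

theorem ae_ofReal_abs_sub_comp_le_two_mul_eLpNorm_top {Y₁ Y₂ : Ω → α} {ρ₁ ρ₂ : α → ℝ≥0∞}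
    (hY₁ : AEMeasurable Y₁ P) (hY₂ : AEMeasurable Y₂ P) (hd₁ : P.map Y₁ = μ.withDensity ρ₁)
    (hd₂ : P.map Y₂ = μ.withDensity ρ₂) (f : α → ℝ) :
    ∀ᵐ ω ∂P, ENNReal.ofReal |f (Y₁ ω) - f (Y₂ ω)| ≤ 2 * eLpNorm f ∞ μ := by
  have hf : ∀ᵐ x ∂μ, ‖f x‖ₑ ≤ eLpNorm f ∞ μ := by
    simpa only [eLpNorm_exponent_top] using ae_le_eLpNormEssSup
  filter_upwards [ae_comp_of_map_eq_withDensity hY₁ hd₁ hf,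
    ae_comp_of_map_eq_withDensity hY₂ hd₂ hf] with ω h₁ h₂
  calc ENNReal.ofReal |f (Y₁ ω) - f (Y₂ ω)| = ‖f (Y₁ ω) - f (Y₂ ω)‖ₑ :=
        (Real.enorm_eq_ofReal_abs _).symm
    _ ≤ ‖f (Y₁ ω)‖ₑ + ‖f (Y₂ ω)‖ₑ := enorm_sub_le
    _ ≤ 2 * eLpNorm f ∞ μ := by rw [two_mul]; gcongr

end Density

theorem memLp_toReal_of_lintegral_rpow_ne_top {α : Type*} [MeasurableSpace α] {μ : Measure α}
    {M : α → ℝ≥0∞} (hM : AEMeasurable M μ) {p : ℝ} (hp : 0 < p)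
    (h : ∫⁻ x, M x ^ p ∂μ ≠ ∞) : MemLp (fun x => (M x).toReal) (ENNReal.ofReal p) μ := by
  refine ⟨hM.ennreal_toReal.aestronglyMeasurable, ?_⟩
  rw [eLpNorm_lt_top_iff_lintegral_rpow_enorm_lt_top (by simpa using hp) ENNReal.ofReal_ne_top,
    ENNReal.toReal_ofReal hp.le]
  refine lt_of_le_of_lt (lintegral_mono fun x => ?_) h.lt_top
  gcongr
  rw [Real.enorm_eq_ofReal ENNReal.toReal_nonneg]
  exact ENNReal.ofReal_toReal_le

def PointwiseBound {α : Type*} [PseudoMetricSpace α] (f : α → ℝ) (M : α → ℝ≥0∞) (K₀ : ℝ)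
    (x y : α) : Prop :=
  ENNReal.ofReal |f x - f y| ≤ ENNReal.ofReal (K₀ * dist x y) * (M x + M y)

theorem ENNReal.le_add_enorm_toReal_sub {a b : ℝ≥0∞} (ha : a ≠ ∞) (hb : b ≠ ∞) :
    a ≤ b + ‖a.toReal - b.toReal‖ₑ :=
  calc a = ENNReal.ofReal a.toReal := (ENNReal.ofReal_toReal ha).symm
    _ ≤ ENNReal.ofReal (b.toReal + |a.toReal - b.toReal|) :=
      ENNReal.ofReal_le_ofReal (by linarith [le_abs_self (a.toReal - b.toReal)])
    _ = b + ‖a.toReal - b.toReal‖ₑ := by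
      rw [ENNReal.ofReal_add ENNReal.toReal_nonneg (abs_nonneg _), ENNReal.ofReal_toReal hb,
        Real.enorm_eq_ofReal_abs]

section LebesguePoints

variable {α : Type*} [MetricSpace α] [MeasurableSpace α] [ProperSpace α]
  {μ : Measure α}

theorem ae_tendsto_setLAverage_closedBall_enorm_sub [BorelSpace α] [IsUnifLocDoublingMeasure μ]
    [IsLocallyFiniteMeasure μ] {E : Type*} [NormedAddCommGroup E] {g : α → E}
    (hg : LocallyIntegrable g μ) :
    ∀ᵐ x ∂μ, Tendsto (fun r => ⨍⁻ y in closedBall x r, ‖g y - g x‖ₑ ∂μ) (𝓝[>] 0) (𝓝 0) := by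
  filter_upwards [(IsUnifLocDoublingMeasure.vitaliFamily μ 1).ae_tendsto_lintegral_enorm_sub_div hg]
    with x hx
  simp_rw [setLAverage_eq]
  refine hx.comp (IsUnifLocDoublingMeasure.tendsto_closedBall_filterAt μ (fun _ => x) id
    tendsto_id ?_)
  filter_upwards [self_mem_nhdsWithin] with r (hr : 0 < r)
  simpa using hr.le

theorem le_of_tendsto_setLAverage_closedBall [μ.IsOpenPosMeasure] [IsFiniteMeasureOnCompacts μ]
    {x : α} {L a₀ : ℝ≥0∞} {a : ℝ → ℝ≥0∞} {k : α → ℝ≥0∞} (ha : Tendsto a (𝓝[>] 0) (𝓝 a₀))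
    (hk : Tendsto (fun r => ⨍⁻ y in closedBall x r, k y ∂μ) (𝓝[>] 0) (𝓝 0))
    (hL : ∀ᶠ r in 𝓝[>] 0, ∀ᵐ y ∂μ.restrict (closedBall x r), L ≤ a r + k y) : L ≤ a₀ := by
  refine ge_of_tendsto (by simpa using ha.add hk) ?_
  filter_upwards [hL, self_mem_nhdsWithin] with r hr (hr0 : 0 < r)
  have hB0 : μ (closedBall x r) ≠ 0 := (measure_closedBall_pos μ x hr0).ne'
  have hBt : μ (closedBall x r) ≠ ∞ := measure_closedBall_lt_top.ne
  calc L = ⨍⁻ _ in closedBall x r, L ∂μ := (setLAverage_const hB0 hBt L).symm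
    _ ≤ ⨍⁻ y in closedBall x r, (a r + k y) ∂μ := laverage_mono_ae hr
    _ = a r + ⨍⁻ y in closedBall x r, k y ∂μ := by
      rw [laverage_eq', lintegral_add_left measurable_const, ← laverage_eq',
        setLAverage_const hB0 hBt, laverage_eq']

theorem pointwiseBound_of_tendsto_setLAverage [OpensMeasurableSpace α] [μ.IsOpenPosMeasure]
    [IsFiniteMeasureOnCompacts μ]
    {f : α → ℝ} {M : α → ℝ≥0∞} {K₀ : ℝ} (hK₀ : 0 ≤ K₀) (hM : Measurable M)
    (hMfin : ∀ᵐ y ∂μ, M y ≠ ∞) {x₁ x₂ : α} (hx₁ : ∀ᵐ y ∂μ, PointwiseBound f M K₀ x₁ y)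
    (hM₁ : M x₁ ≠ ∞) (hM₂ : M x₂ ≠ ∞)
    (hf₂ : Tendsto (fun r => ⨍⁻ y in closedBall x₂ r, ‖f y - f x₂‖ₑ ∂μ) (𝓝[>] 0) (𝓝 0))
    (hM'₂ : Tendsto (fun r => ⨍⁻ y in closedBall x₂ r, ‖(M y).toReal - (M x₂).toReal‖ₑ ∂μ)
      (𝓝[>] 0) (𝓝 0)) :
    PointwiseBound f M K₀ x₁ x₂ := by
  set c := fun r => ENNReal.ofReal (K₀ * (dist x₁ x₂ + r))
  have hc : Tendsto c (𝓝[>] 0) (𝓝 (ENNReal.ofReal (K₀ * dist x₁ x₂))) := by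
    refine ENNReal.tendsto_ofReal (Tendsto.mono_left ?_ nhdsWithin_le_nhds)
    simpa using ((continuous_const.add continuous_id).const_mul K₀).tendsto' 0 _ rfl
  -- `c r ≤ c 1` for `r ≤ 1`, so the error term `k` can be chosen independent of `r`.
  refine le_of_tendsto_setLAverage_closedBall (μ := μ) (x := x₂)
    (a := fun r => c r * (M x₁ + M x₂))
    (k := fun y => c 1 * ‖(M y).toReal - (M x₂).toReal‖ₑ + ‖f y - f x₂‖ₑ)
    (ENNReal.Tendsto.mul_const hc (Or.inr (ENNReal.add_ne_top.2 ⟨hM₁, hM₂⟩))) ?_ ?_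
  · have hk : ∀ r, ⨍⁻ y in closedBall x₂ r, (c 1 * ‖(M y).toReal - (M x₂).toReal‖ₑ
        + ‖f y - f x₂‖ₑ) ∂μ = c 1 * ⨍⁻ y in closedBall x₂ r, ‖(M y).toReal - (M x₂).toReal‖ₑ ∂μ
          + ⨍⁻ y in closedBall x₂ r, ‖f y - f x₂‖ₑ ∂μ := fun r => by
      simp only [laverage_eq']
      rw [lintegral_add_left ((hM.ennreal_toReal.sub_const _).enorm.const_mul _),
        lintegral_const_mul _ (hM.ennreal_toReal.sub_const _).enorm]
    simp_rw [hk]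
    simpa using (ENNReal.Tendsto.const_mul hM'₂ (Or.inr ENNReal.ofReal_ne_top)).add hf₂
  · filter_upwards [Ioc_mem_nhdsGT one_pos] with r hr
    filter_upwards [ae_restrict_of_ae hx₁, ae_restrict_of_ae hMfin,
      ae_restrict_mem measurableSet_closedBall] with y hy hMy (hyB : dist y x₂ ≤ r)
    have hc_mono : ∀ {s t : ℝ}, s ≤ t → c s ≤ c t := fun hst =>
      ENNReal.ofReal_le_ofReal (mul_le_mul_of_nonneg_left (by linarith) hK₀)
    have hdist : dist x₁ y ≤ dist x₁ x₂ + r := by linarith [dist_triangle x₁ x₂ y, dist_comm y x₂]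
    calc ENNReal.ofReal |f x₁ - f x₂| = edist (f x₁) (f x₂) := by rw [edist_dist, Real.dist_eq]
      _ ≤ edist (f x₁) (f y) + ‖f y - f x₂‖ₑ := by
        rw [← edist_eq_enorm_sub]; exact edist_triangle _ _ _
      _ ≤ ENNReal.ofReal (K₀ * dist x₁ y) * (M x₁ + M y) + ‖f y - f x₂‖ₑ := by
        rw [edist_dist, Real.dist_eq]; gcongr; exact hy
      _ ≤ c r * (M x₁ + (M x₂ + ‖(M y).toReal - (M x₂).toReal‖ₑ)) + ‖f y - f x₂‖ₑ := by
        gcongr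
        · exact ENNReal.ofReal_le_ofReal (mul_le_mul_of_nonneg_left hdist hK₀)
        · exact ENNReal.le_add_enorm_toReal_sub hMy hM₂
      _ ≤ c r * (M x₁ + M x₂) + (c 1 * ‖(M y).toReal - (M x₂).toReal‖ₑ + ‖f y - f x₂‖ₑ) := by
        rw [← add_assoc, mul_add, add_assoc (c r * _)]
        gcongr
        exact hc_mono hr.2

theorem exists_ae_mem_forall_pointwiseBound [BorelSpace α] [IsUnifLocDoublingMeasure μ]
    [IsLocallyFiniteMeasure μ] [μ.IsOpenPosMeasure] {f : α → ℝ} {M : α → ℝ≥0∞} {K₀ p : ℝ}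
    (hK₀ : 0 ≤ K₀) (hp : 1 ≤ p) (hf : LocallyIntegrable f μ) (hM : Measurable M)
    (hMp : ∫⁻ x, M x ^ p ∂μ ≠ ∞) (hpt : ∀ᵐ x ∂μ, ∀ᵐ y ∂μ, PointwiseBound f M K₀ x y) :
    ∃ S : Set α, (∀ᵐ x ∂μ, x ∈ S) ∧ ∀ x₁ ∈ S, ∀ x₂ ∈ S, PointwiseBound f M K₀ x₁ x₂ := by
  have hp0 : 0 < p := zero_lt_one.trans_le hp
  have hMfin : ∀ᵐ x ∂μ, M x ≠ ∞ := (ae_lt_top (hM.pow_const p) hMp).mono fun x hx =>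
    ((ENNReal.rpow_lt_top_iff_of_pos hp0).1 hx).ne
  have hMloc := (memLp_toReal_of_lintegral_rpow_ne_top hM.aemeasurable hp0 hMp).locallyIntegrable
    (ENNReal.one_le_ofReal.2 hp)
  refine ⟨{x | M x ≠ ∞ ∧ (∀ᵐ y ∂μ, PointwiseBound f M K₀ x y)
    ∧ Tendsto (fun r => ⨍⁻ y in closedBall x r, ‖f y - f x‖ₑ ∂μ) (𝓝[>] 0) (𝓝 0)
    ∧ Tendsto (fun r => ⨍⁻ y in closedBall x r, ‖(M y).toReal - (M x).toReal‖ₑ ∂μ)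
        (𝓝[>] 0) (𝓝 0)}, ?_, ?_⟩
  · filter_upwards [hMfin, hpt, ae_tendsto_setLAverage_closedBall_enorm_sub hf,
      ae_tendsto_setLAverage_closedBall_enorm_sub hMloc] with x h₁ h₂ h₃ h₄ using ⟨h₁, h₂, h₃, h₄⟩
  · rintro x₁ ⟨hM₁, hx₁, -, -⟩ x₂ ⟨hM₂, -, hf₂, hM'₂⟩
    exact pointwiseBound_of_tendsto_setLAverage hK₀ hM hMfin hx₁ hM₁ hM₂ hf₂ hM'₂

end LebesguePoints

section TailSplitting

variable {Ω : Type*} [MeasurableSpace Ω] {P : Measure Ω}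

theorem lintegral_le_mul_lintegral_add_mul_measure_compl {F W : Ω → ℝ≥0∞} {G : Set Ω}
    (hG : MeasurableSet G) (hW : Measurable W) {a b : ℝ≥0∞}
    (hFG : ∀ᵐ ω ∂P, ω ∈ G → F ω ≤ a * W ω) (hFb : ∀ᵐ ω ∂P, F ω ≤ b) :
    ∫⁻ ω, F ω ∂P ≤ a * ∫⁻ ω, W ω ∂P + b * P Gᶜ := by
  rw [← lintegral_add_compl F hG]
  gcongr
  · calc ∫⁻ ω in G, F ω ∂P ≤ ∫⁻ ω in G, a * W ω ∂P :=
          setLIntegral_mono_ae (hW.const_mul a).aemeasurable hFG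
      _ ≤ ∫⁻ ω, a * W ω ∂P := setLIntegral_le_lintegral G _
      _ = a * ∫⁻ ω, W ω ∂P := lintegral_const_mul a hW
  · calc ∫⁻ ω in Gᶜ, F ω ∂P ≤ ∫⁻ _ in Gᶜ, b ∂P :=
          setLIntegral_mono_ae aemeasurable_const (hFb.mono fun ω h _ => h)
      _ = b * P Gᶜ := setLIntegral_const _ _

variable {Z E m₁ m₂ : Ω → ℝ≥0∞} {K B : ℝ≥0∞} {q : ℝ}

theorem lintegral_rpow_le_of_level (hq : 0 < q) (hE : Measurable E) (hm₁ : Measurable m₁)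
    (hm₂ : Measurable m₂) (hZ : ∀ᵐ ω ∂P, Z ω ≤ K * E ω * (m₁ ω + m₂ ω))
    (hZB : ∀ᵐ ω ∂P, Z ω ≤ B) (Λ : ℝ≥0∞) :
    ∫⁻ ω, Z ω ^ q ∂P ≤ (2 * K * Λ) ^ q * ∫⁻ ω, E ω ^ q ∂P
      + B ^ q * (P {ω | Λ < m₁ ω} + P {ω | Λ < m₂ ω}) := by
  set G := {ω | m₁ ω ≤ Λ} ∩ {ω | m₂ ω ≤ Λ}
  have hG : MeasurableSet G :=
    (measurableSet_le hm₁ measurable_const).inter (measurableSet_le hm₂ measurable_const)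
  have hGc : P Gᶜ ≤ P {ω | Λ < m₁ ω} + P {ω | Λ < m₂ ω} := by
    refine (measure_mono fun ω hω => ?_).trans (measure_union_le _ _)
    simpa [G, or_iff_not_imp_left] using hω
  refine (lintegral_le_mul_lintegral_add_mul_measure_compl hG (hE.pow_const q) ?_ ?_).trans
    (by gcongr)
  · filter_upwards [hZ] with ω hω ⟨hω₁, hω₂⟩
    rw [← ENNReal.mul_rpow_of_nonneg _ _ hq.le]
    gcongr
    calc Z ω ≤ K * E ω * (Λ + Λ) := hω.trans (by gcongr <;> assumption)
      _ = 2 * K * Λ * E ω := by ring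
  · filter_upwards [hZB] with ω hω
    exact ENNReal.rpow_le_rpow hω hq.le

theorem ENNReal.rpow_neg_one_div_add_one_rpow_mul_self {ε : ℝ≥0∞} (hε0 : ε ≠ 0) (hεt : ε ≠ ∞)
    (hq : 0 < q) :
    (ε ^ (-(1 / (q + 1)))) ^ q * ε = ε ^ (1 / (q + 1)) := by
  conv_lhs => rw [← ENNReal.rpow_mul]; enter [2]; rw [← ENNReal.rpow_one ε]
  rw [← ENNReal.rpow_add _ _ hε0 hεt]
  congr 1
  field_simp
  ring

theorem lintegral_rpow_le_of_tail_le (hq : 0 < q) (hK : K ≠ 0) (hE : Measurable E)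
    (hm₁ : Measurable m₁) (hm₂ : Measurable m₂) (hZ : ∀ᵐ ω ∂P, Z ω ≤ K * E ω * (m₁ ω + m₂ ω))
    (hZB : ∀ᵐ ω ∂P, Z ω ≤ B) {T₁ T₂ : ℝ≥0∞}
    (hT₁ : ∀ Λ : ℝ≥0∞, Λ ≠ 0 → Λ ≠ ∞ → P {ω | Λ < m₁ ω} ≤ Λ⁻¹ * T₁)
    (hT₂ : ∀ Λ : ℝ≥0∞, Λ ≠ 0 → Λ ≠ ∞ → P {ω | Λ < m₂ ω} ≤ Λ⁻¹ * T₂) :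
    ∫⁻ ω, Z ω ^ q ∂P
      ≤ ((2 * K) ^ q + B ^ q * (T₁ + T₂)) * (∫⁻ ω, E ω ^ q ∂P) ^ (1 / (q + 1)) := by
  set ε := ∫⁻ ω, E ω ^ q ∂P
  rcases eq_or_ne ε 0 with hε0 | hε0
  · have hE0 : ∀ᵐ ω ∂P, E ω = 0 := by
      filter_upwards [(lintegral_eq_zero_iff (hE.pow_const q)).1 hε0] with ω hω
      simpa [hq, hq.not_gt] using hω
    have hZ0 : ∀ᵐ ω ∂P, Z ω ^ q = 0 := by
      filter_upwards [hZ, hE0] with ω hω hω0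
      have hZω : Z ω = 0 := by simpa [hω0] using hω
      rw [hZω, ENNReal.zero_rpow_of_pos hq]
    simp [lintegral_congr_ae hZ0]
  rcases eq_or_ne ε ∞ with hεt | hεt
  · have hC : (2 * K) ^ q + B ^ q * (T₁ + T₂) ≠ 0 := by
      simp [ENNReal.rpow_eq_zero_iff, hK, hq, hq.not_gt]
    rw [hεt, ENNReal.top_rpow_of_pos (by positivity), ENNReal.mul_top hC]
    exact le_top
  set Λ := ε ^ (-(1 / (q + 1)))
  have hΛ0 : Λ ≠ 0 := by simp [Λ, ENNReal.rpow_eq_zero_iff, hε0, hεt]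
  have hΛt : Λ ≠ ∞ := by simp [Λ, ENNReal.rpow_eq_top_iff, hε0, hεt]
  have hΛinv : Λ⁻¹ = ε ^ (1 / (q + 1)) := by rw [← ENNReal.rpow_neg, neg_neg]
  calc ∫⁻ ω, Z ω ^ q ∂P ≤ (2 * K * Λ) ^ q * ε + B ^ q * (P {ω | Λ < m₁ ω} + P {ω | Λ < m₂ ω}) :=
        lintegral_rpow_le_of_level hq hE hm₁ hm₂ hZ hZB Λ
    _ ≤ (2 * K) ^ q * (Λ ^ q * ε) + B ^ q * (Λ⁻¹ * T₁ + Λ⁻¹ * T₂) := by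
      rw [ENNReal.mul_rpow_of_nonneg _ _ hq.le, mul_assoc]
      gcongr
      exacts [hT₁ Λ hΛ0 hΛt, hT₂ Λ hΛ0 hΛt]
    _ = _ := by rw [ENNReal.rpow_neg_one_div_add_one_rpow_mul_self hε0 hεt hq, hΛinv]; ring

end TailSplitting

theorem ENNReal.two_mul_rpow_eq_ofReal {a : ℝ≥0∞} (ha : a ≠ ∞) {q : ℝ} (hq : 0 ≤ q) :
    (2 * a) ^ q = ENNReal.ofReal ((2 * a.toReal) ^ q) := by
  rw [← ENNReal.ofReal_rpow_of_nonneg (by positivity) hq, ENNReal.ofReal_mul zero_le_two,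
    ENNReal.ofReal_ofNat, ENNReal.ofReal_toReal ha]

theorem stmt_11_general {d : ℕ} {Ω : Type*} [MeasurableSpace Ω] (P : Measure Ω) [IsProbabilityMeasure P]
    (X Xh : Ω → Euc d) (hX : Measurable X) (hXh : Measurable Xh)
    (pX pXh : Euc d → ℝ≥0∞)
    (hdX : P.map X = volume.withDensity pX)
    (hdXh : P.map Xh = volume.withDensity pXh)
    (p q K₀ Ap : ℝ) (hp : 1 < p) (hq : 0 < q) (hK₀ : 0 < K₀)
    (f : Euc d → ℝ) (Df : Euc d → Euc d)
    (hfLp : MemLp f (ENNReal.ofReal p) volume)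
    (hDfLp : ∫⁻ x, (‖Df x‖₊ : ℝ≥0∞) ^ p ∂volume ≠ ∞)
    (hfb : eLpNorm f ⊤ volume ≠ ∞)
    (hpt : ∀ᵐ x ∂(volume : Measure (Euc d)), ∀ᵐ y ∂(volume : Measure (Euc d)),
      ENNReal.ofReal |f x - f y|
        ≤ ENNReal.ofReal (K₀ * dist x y)
          * (maximal (volume.withDensity fun z => (‖Df z‖₊ : ℝ≥0∞)) x
            + maximal (volume.withDensity fun z => (‖Df z‖₊ : ℝ≥0∞)) y))
    (hstrong : (∫⁻ x, maximal (volume.withDensity fun z => (‖Df z‖₊ : ℝ≥0∞)) x ^ p ∂volume) ^ (1 / p)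
        ≤ ENNReal.ofReal Ap * (∫⁻ x, (‖Df x‖₊ : ℝ≥0∞) ^ p ∂volume) ^ (1 / p)) :
    ∫⁻ ω, ENNReal.ofReal |f (X ω) - f (Xh ω)| ^ q ∂P
      ≤ (ENNReal.ofReal ((2 * K₀) ^ q)
          + ENNReal.ofReal ((2 * (eLpNorm f ⊤ volume).toReal) ^ q) * ENNReal.ofReal Ap
            * ((∫⁻ x, pX x ^ (p / (p - 1)) ∂volume) ^ ((p - 1) / p)
              + (∫⁻ x, pXh x ^ (p / (p - 1)) ∂volume) ^ ((p - 1) / p))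
            * (∫⁻ x, (‖Df x‖₊ : ℝ≥0∞) ^ p ∂volume) ^ (1 / p))
        * (∫⁻ ω, edist (X ω) (Xh ω) ^ q ∂P) ^ (1 / (q + 1)) := by
  set M := maximal (volume.withDensity fun z => (‖Df z‖₊ : ℝ≥0∞))
  have hM : Measurable M := measurable_maximal _
  have hMp : ∫⁻ x, M x ^ p ∂volume ≠ ∞ := by
    have := hstrong.trans_lt (ENNReal.mul_lt_top ENNReal.ofReal_lt_top
      (ENNReal.rpow_lt_top_of_nonneg (by positivity) hDfLp))
    exact ((ENNReal.rpow_lt_top_iff_of_pos (by positivity)).1 this).ne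
  obtain ⟨S, hS, hSbound⟩ := exists_ae_mem_forall_pointwiseBound hK₀.le hp.le
    (hfLp.locallyIntegrable (ENNReal.one_le_ofReal.2 hp.le)) hM hMp hpt
  have hZ : ∀ᵐ ω ∂P, ENNReal.ofReal |f (X ω) - f (Xh ω)|
      ≤ ENNReal.ofReal K₀ * edist (X ω) (Xh ω) * (M (X ω) + M (Xh ω)) := by
    filter_upwards [ae_comp_of_map_eq_withDensity hX.aemeasurable hdX hS,
      ae_comp_of_map_eq_withDensity hXh.aemeasurable hdXh hS] with ω h₁ h₂
    simpa only [PointwiseBound, ENNReal.ofReal_mul hK₀.le, ← edist_dist] using hSbound _ h₁ _ h₂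
  have hT : ∀ {Y : Ω → Euc d} {pY : Euc d → ℝ≥0∞}, Measurable Y →
      P.map Y = volume.withDensity pY → ∀ Λ : ℝ≥0∞, Λ ≠ 0 → Λ ≠ ∞ →
        P {ω | Λ < M (Y ω)} ≤ Λ⁻¹ * (ENNReal.ofReal Ap
          * (∫⁻ x, (‖Df x‖₊ : ℝ≥0∞) ^ p ∂volume) ^ (1 / p)
          * (∫⁻ x, pY x ^ (p / (p - 1)) ∂volume) ^ ((p - 1) / p)) := fun hY hdY Λ hΛ0 hΛt => by
    refine (measure_lt_comp_le_of_map_eq_withDensity (r := p / (p - 1)) hY hdY hM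
      (.conjExponent hp) hΛ0 hΛt).trans ?_
    rw [one_div_div]
    gcongr
  refine (lintegral_rpow_le_of_tail_le hq (by simpa using hK₀) (hX.edist hXh) (hM.comp hX)
    (hM.comp hXh) hZ
    (ae_ofReal_abs_sub_comp_le_two_mul_eLpNorm_top hX.aemeasurable hXh.aemeasurable hdX hdXh f)
    (hT hX hdX) (hT hXh hdXh)).trans_eq ?_
  rw [ENNReal.two_mul_rpow_eq_ofReal ENNReal.ofReal_ne_top hq.le, ENNReal.toReal_ofReal hK₀.le,
    ENNReal.two_mul_rpow_eq_ofReal hfb hq.le]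
  ring

/-- Corollary 2.19 (case of `L^{p*}` densities, `r = ∞`): Avikainen-type estimate for
essentially bounded Sobolev functions `f ∈ W^{1,p}(ℝ^d)`, `1 < p < ∞`, with densities
`p_X, p_X̂ ∈ L^{p*}`, `p* = p/(p−1)`.  `Df` is the weak gradient of `f`, `K₀` the constant
of the pointwise maximal estimate and `A_p` the constant of the strong `(p,p)`
Hardy–Littlewood maximal inequality. -/
theorem stmt_11 {d : ℕ} {Ω : Type*} [MeasurableSpace Ω] (P : Measure Ω) [IsProbabilityMeasure P]
    (X Xh : Ω → Euc d) (hX : Measurable X) (hXh : Measurable Xh)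
    (pX pXh : Euc d → ℝ≥0∞)
    (hdX : P.map X = volume.withDensity pX)
    (hdXh : P.map Xh = volume.withDensity pXh)
    (p q K₀ Ap : ℝ) (hp : 1 < p) (hq : 0 < q) (hK₀ : 0 < K₀) (hAp : 0 < Ap)
    (hLpX : ∫⁻ x, pX x ^ (p / (p - 1)) ∂volume ≠ ∞)
    (hLpXh : ∫⁻ x, pXh x ^ (p / (p - 1)) ∂volume ≠ ∞)
    (f : Euc d → ℝ) (Df : Euc d → Euc d)
    (hgrad : ∀ g : Euc d → Euc d, ContDiff ℝ 1 g → HasCompactSupport g →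
      ∫ x, f x * ediv g x = - ∫ x, (inner ℝ (Df x) (g x) : ℝ))
    (hfLp : MemLp f (ENNReal.ofReal p) volume)
    (hDfLp : ∫⁻ x, (‖Df x‖₊ : ℝ≥0∞) ^ p ∂volume ≠ ∞)
    (hfb : eLpNorm f ⊤ volume ≠ ∞)
    (hpt : ∀ᵐ x ∂(volume : Measure (Euc d)), ∀ᵐ y ∂(volume : Measure (Euc d)),
      ENNReal.ofReal |f x - f y|
        ≤ ENNReal.ofReal (K₀ * dist x y)
          * (maximal (volume.withDensity fun z => (‖Df z‖₊ : ℝ≥0∞)) x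
            + maximal (volume.withDensity fun z => (‖Df z‖₊ : ℝ≥0∞)) y))
    (hstrong : (∫⁻ x, maximal (volume.withDensity fun z => (‖Df z‖₊ : ℝ≥0∞)) x ^ p ∂volume) ^ (1 / p)
        ≤ ENNReal.ofReal Ap * (∫⁻ x, (‖Df x‖₊ : ℝ≥0∞) ^ p ∂volume) ^ (1 / p)) :
    ∫⁻ ω, ENNReal.ofReal |f (X ω) - f (Xh ω)| ^ q ∂P
      ≤ (ENNReal.ofReal ((2 * K₀) ^ q)
          + ENNReal.ofReal ((2 * (eLpNorm f ⊤ volume).toReal) ^ q) * ENNReal.ofReal Ap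
            * ((∫⁻ x, pX x ^ (p / (p - 1)) ∂volume) ^ ((p - 1) / p)
              + (∫⁻ x, pXh x ^ (p / (p - 1)) ∂volume) ^ ((p - 1) / p))
            * (∫⁻ x, (‖Df x‖₊ : ℝ≥0∞) ^ p ∂volume) ^ (1 / p))
        * (∫⁻ ω, edist (X ω) (Xh ω) ^ q ∂P) ^ (1 / (q + 1)) :=
  stmt_11_general P X Xh hX hXh pX pXh hdX hdXh p q K₀ Ap hp hq hK₀ f Df hfLp hDfLp hfb hpt hstrong
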